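/- Let p be a prime. (i) If L is a Moufang loop with a central subgroup Z of order p such that C = L/Z is a (finite) elementary abelian p-group, then the functions given by σ(c) = γ^p, χ(c,d) = [γ,δ], α(c,d,e) = [γ,δ,ε], for arbitrary preimages γ, δ, ε ∈ L of c, d, e ∈ C, are well defined with values in Z, and (C,σ,χ,α) is a coded vector space over F_p; hence L is a coded extension of this CVS. (ii) Conversely, every loop L which is a coded extension of some coded vector space over F_p is a Moufang loop (and hence a small Frattini Moufang p-loop). -/
import Mathlib


/-- An inverse property loop: a set with multiplication, identity, and two-sided
inverses satisfying `a⁻¹(ax) = x = (xa)a⁻¹`. -/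
class IPLoop (L : Type*) extends Mul L, One L, Inv L where
  one_mul : ∀ a : L, 1 * a = a
  mul_one : ∀ a : L, a * 1 = a
  inv_mul_cancel_left : ∀ a x : L, a⁻¹ * (a * x) = x
  mul_inv_cancel_right : ∀ a x : L, (x * a) * a⁻¹ = x

namespace IPLoop

variable {L : Type*} [IPLoop L]

/-- Powers with natural number exponent, `c^(n+1) = c * c^n`. -/
def npow (c : L) : ℕ → L
  | 0 => 1
  | n + 1 => c * npow c n

instance : Pow L ℕ := ⟨npow⟩

/-- Powers with integer exponent. -/
def zpow (c : L) : ℤ → L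
  | Int.ofNat n => c ^ n
  | Int.negSucc n => (c ^ (n + 1))⁻¹

instance : Pow L ℤ := ⟨zpow⟩

/-- The commutator `[c,d] = (dc)⁻¹(cd)`. -/
def comm (c d : L) : L := (d * c)⁻¹ * (c * d)

/-- The associator `[c,d,e] = (c(de))⁻¹((cd)e)`. -/
def assoc (c d e : L) : L := (c * (d * e))⁻¹ * ((c * d) * e)

/-- Membership in the center `Z(L)`. -/
def inCenter (z : L) : Prop :=
  (∀ x : L, comm z x = 1) ∧
  ∀ x y : L, assoc z x y = 1 ∧ assoc x z y = 1 ∧ assoc x y z = 1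

/-- The Moufang identity `((dc)e)c = d(c(ec))`. -/
def IsMoufang (L : Type*) [IPLoop L] : Prop :=
  ∀ c d e : L, ((d * c) * e) * c = d * (c * (e * c))

/-- A loop is of (central nilpotence) class at most 2 if every commutator and
every associator lies in the center. -/
def ClassTwo (L : Type*) [IPLoop L] : Prop :=
  (∀ c d : L, inCenter (comm c d)) ∧ ∀ c d e : L, inCenter (assoc c d e)

/-- The order of an element: least `n > 0` with `c^n = 1` (or `0` if none). -/
noncomputable def ordOf (c : L) : ℕ := sInf {n : ℕ | 0 < n ∧ c ^ n = 1}

/-- The subloop generated by a subset `S`. -/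
def subloopClosure (S : Set L) : Set L :=
  ⋂₀ {T : Set L | (1 : L) ∈ T ∧ (∀ x ∈ T, x⁻¹ ∈ T) ∧
      (∀ x ∈ T, ∀ y ∈ T, x * y ∈ T) ∧ S ⊆ T}

end IPLoop

/-- A coded vector space over `F_p`: a finite elementary abelian `p`-group `C`
(written multiplicatively) together with `σ`, `χ`, `α` taking values in the
group `Z` of order `p`, satisfying the symplectic, skew-symmetric,
power-multilinear, polarization, and multilinearity identities. -/
structure CVSData (p : ℕ) (C : Type*) [CommGroup C] where
  finiteC : Finite C
  elemC : ∀ c : C, c ^ p = 1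
  σ : C → Multiplicative (ZMod p)
  χ : C → C → Multiplicative (ZMod p)
  α : C → C → C → Multiplicative (ZMod p)
  σ_pow : ∀ (c : C) (n : ℤ), σ (c ^ n) = σ c ^ n
  σ_mul_two : p = 2 → ∀ c d : C, σ (c * d) = σ c * σ d * χ c d
  σ_mul_odd : 2 < p → ∀ c d : C, σ (c * d) = σ c * σ d
  χ_symp : ∀ c : C, χ c c = 1
  χ_skew : ∀ c d : C, χ c d = (χ d c)⁻¹
  χ_pow : ∀ (c d : C) (n : ℤ), χ (c ^ n) d = χ c d ^ n
  χ_mul : ∀ c d e : C, χ (c * d) e = χ c e * χ d e * α c d e ^ (3 : ℕ)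
  α_symp : ∀ c d : C, α c d d = 1 ∧ α d c d = 1 ∧ α d d c = 1
  α_skew : ∀ c d e : C, α c d e = (α d c e)⁻¹ ∧ α c d e = α d e c
  α_pow : ∀ (c d e : C) (n : ℤ), α (c ^ n) d e = α c d e ^ n
  α_mul : ∀ c d e f : C, α (c * d) e f = α c e f * α d e f

/-- `L` is a coded extension of the coded vector space `(C,σ,χ,α)`: there is a
surjective homomorphism `π : L → C` whose kernel is a central subgroup of
order `p` (the image of the injective homomorphism `ι` from the group `Z` of
order `p`), such that `γ^p = σ(c)`, `[γ,δ] = χ(c,d)`, and `[γ,δ,ε] = α(c,d,e)`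
for all preimages `γ, δ, ε` of `c, d, e ∈ C`. -/
structure CodedExtension (p : ℕ) (C : Type*) [CommGroup C] (V : CVSData p C)
    (L : Type*) [IPLoop L] where
  π : L → C
  ι : Multiplicative (ZMod p) → L
  π_surj : Function.Surjective π
  π_mul : ∀ x y : L, π (x * y) = π x * π y
  ι_inj : Function.Injective ι
  ι_mul : ∀ z w : Multiplicative (ZMod p), ι (z * w) = ι z * ι w
  ι_central : ∀ z : Multiplicative (ZMod p), IPLoop.inCenter (ι z)
  ker_eq : ∀ x : L, π x = 1 ↔ ∃ z : Multiplicative (ZMod p), x = ι z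
  pow_eq : ∀ x : L, x ^ p = ι (V.σ (π x))
  comm_eq : ∀ x y : L, IPLoop.comm x y = ι (V.χ (π x) (π y))
  assoc_eq : ∀ x y z : L, IPLoop.assoc x y z = ι (V.α (π x) (π y) (π z))


namespace IPLoop
variable {L : Type*} [IPLoop L]

theorem inv_mul (a : L) : a⁻¹ * a = 1 := by
  have h := IPLoop.inv_mul_cancel_left a 1
  rwa [IPLoop.mul_one] at h

theorem mul_inv (a : L) : a * a⁻¹ = 1 := by
  have h := IPLoop.mul_inv_cancel_right a 1
  rwa [IPLoop.one_mul] at h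

theorem mul_left_cancel' {a x y : L} (h : a * x = a * y) : x = y := by
  have := congrArg (fun t => a⁻¹ * t) h
  simpa [IPLoop.inv_mul_cancel_left] using this

theorem mul_right_cancel' {a x y : L} (h : x * a = y * a) : x = y := by
  have := congrArg (fun t => t * a⁻¹) h
  simpa [IPLoop.mul_inv_cancel_right] using this

theorem eq_inv_of_mul_eq_one {a b : L} (h : a * b = 1) : b = a⁻¹ := by
  have h2 := IPLoop.inv_mul_cancel_left a b
  rw [h, IPLoop.mul_one] at h2
  exact h2.symm

theorem inv_inv' (a : L) : a⁻¹⁻¹ = a := (eq_inv_of_mul_eq_one (inv_mul a)).symm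

theorem mul_inv_cancel_left' (a x : L) : a * (a⁻¹ * x) = x := by
  have h := IPLoop.inv_mul_cancel_left a⁻¹ x
  rwa [inv_inv'] at h

theorem inv_mul_cancel_right' (x a : L) : (x * a⁻¹) * a = x := by
  have h := IPLoop.mul_inv_cancel_right a⁻¹ x
  rwa [inv_inv'] at h

theorem eq_of_inv_mul_eq_one {a b : L} (h : a⁻¹ * b = 1) : a = b := by
  have h2 := mul_inv_cancel_left' a b
  rw [h, IPLoop.mul_one] at h2
  exact h2

theorem inv_one' : (1 : L)⁻¹ = 1 := by
  have := inv_mul (1 : L)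
  rwa [IPLoop.mul_one] at this

theorem mul_inv_rev' (a b : L) : (a * b)⁻¹ = b⁻¹ * a⁻¹ := by
  have hb : b * (a * b)⁻¹ = a⁻¹ := by
    have h := IPLoop.mul_inv_cancel_right (a * b) a⁻¹
    rwa [IPLoop.inv_mul_cancel_left] at h
  have h2 := IPLoop.inv_mul_cancel_left b (a * b)⁻¹
  rw [hb] at h2
  exact h2.symm

theorem comm_spec (x y : L) : x * y = (y * x) * comm x y :=
  (mul_inv_cancel_left' (y * x) (x * y)).symm

theorem assoc_spec (x y z : L) : (x * y) * z = (x * (y * z)) * assoc x y z :=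
  (mul_inv_cancel_left' (x * (y * z)) ((x * y) * z)).symm

theorem assoc_eq_one_of {x y z : L} (h : (x * y) * z = x * (y * z)) : assoc x y z = 1 := by
  unfold assoc; rw [← h, inv_mul]

theorem mul_assoc_of_assoc_eq_one {x y z : L} (h : assoc x y z = 1) :
    (x * y) * z = x * (y * z) := by
  have := assoc_spec x y z
  rwa [h, IPLoop.mul_one] at this

theorem comm_eq_one_of {x y : L} (h : x * y = y * x) : comm x y = 1 := by
  unfold comm; rw [← h, inv_mul]

theorem mul_comm_of_comm_eq_one {x y : L} (h : comm x y = 1) : x * y = y * x := by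
  have := comm_spec x y
  rwa [h, IPLoop.mul_one] at this

theorem comm_self (x : L) : comm x x = 1 := comm_eq_one_of rfl

theorem comm_skew (x y : L) : comm y x = (comm x y)⁻¹ := by
  have h1 : x * y = (y * x) * comm x y := comm_spec x y
  show (x * y)⁻¹ * (y * x) = (comm x y)⁻¹
  rw [h1, mul_inv_rev' (y * x) (comm x y)]
  exact inv_mul_cancel_right' _ _

theorem assoc_one_left (y z : L) : assoc 1 y z = 1 :=
  assoc_eq_one_of (by rw [IPLoop.one_mul, IPLoop.one_mul])
theorem assoc_one_mid (x z : L) : assoc x 1 z = 1 :=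
  assoc_eq_one_of (by rw [IPLoop.mul_one, IPLoop.one_mul])
theorem assoc_one_right (x y : L) : assoc x y 1 = 1 :=
  assoc_eq_one_of (by rw [IPLoop.mul_one, IPLoop.mul_one])

end IPLoop

namespace IPLoop
variable {L : Type*} [IPLoop L]

theorem inCenter.swap {s : L} (hs : inCenter s) (x : L) : s * x = x * s :=
  (mul_comm_of_comm_eq_one (hs.1 x))

theorem inCenter.a1 {s : L} (hs : inCenter s) (x y : L) : (s * x) * y = s * (x * y) :=
  mul_assoc_of_assoc_eq_one (hs.2 x y).1

theorem inCenter.a2 {s : L} (hs : inCenter s) (x y : L) : (x * s) * y = x * (s * y) :=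
  mul_assoc_of_assoc_eq_one (hs.2 x y).2.1

theorem inCenter.a3 {s : L} (hs : inCenter s) (x y : L) : (x * y) * s = x * (y * s) :=
  mul_assoc_of_assoc_eq_one (hs.2 x y).2.2

/-- move a central factor out to the right -/
theorem inCenter.shift1 {s : L} (hs : inCenter s) (x y : L) : (x * s) * y = (x * y) * s := by
  rw [hs.a2, hs.swap, ← hs.a3]

theorem inCenter.shift2 {s : L} (hs : inCenter s) (x y : L) : x * (s * y) = (x * y) * s := by
  rw [← hs.a2, hs.shift1]

theorem inCenter.shift3 {s : L} (hs : inCenter s) (x y : L) : (s * x) * y = (x * y) * s := by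
  rw [hs.swap x, hs.shift1]

theorem inCenter.shift4 {s : L} (hs : inCenter s) (x y : L) : x * (y * s) = (x * y) * s :=
  (hs.a3 x y).symm

theorem inCenter_one : inCenter (1 : L) := by
  constructor
  · intro x; exact comm_eq_one_of (by rw [IPLoop.one_mul, IPLoop.mul_one])
  · intro x y
    exact ⟨assoc_one_left x y, assoc_one_mid x y, assoc_one_right x y⟩

theorem inCenter.mul {s t : L} (hs : inCenter s) (ht : inCenter t) : inCenter (s * t) := by
  constructor
  · intro x
    apply comm_eq_one_of
    rw [hs.a1 t x, ht.swap x, ← hs.a1 x t, hs.swap x, ht.a3 x s]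
  · intro x y
    refine ⟨?_, ?_, ?_⟩
    · apply assoc_eq_one_of
      rw [hs.a1 t x, hs.a1 (t * x) y, ht.a1 x y, ← hs.a1 t (x * y)]
    · apply assoc_eq_one_of
      rw [← ht.a3 x s, ht.a2 (x * s) y, hs.a2 x (t * y), ← hs.a1 t y]
    · apply assoc_eq_one_of
      rw [← ht.a3 (x * y) s, hs.a3 x y, ht.a3 x (y * s), ht.a3 y s]

theorem inCenter.inv {s : L} (hs : inCenter s) : inCenter s⁻¹ := by
  have hswap : ∀ x : L, s⁻¹ * x = x * s⁻¹ := by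
    intro x
    apply mul_left_cancel' (a := s)
    rw [mul_inv_cancel_left', ← hs.a1 x s⁻¹, hs.swap x, IPLoop.mul_inv_cancel_right]
  have ha1 : ∀ x y : L, (s⁻¹ * x) * y = s⁻¹ * (x * y) := by
    intro x y
    apply mul_left_cancel' (a := s)
    rw [mul_inv_cancel_left', ← hs.a1 (s⁻¹ * x) y, mul_inv_cancel_left']
  have ha3 : ∀ x y : L, (x * y) * s⁻¹ = x * (y * s⁻¹) := by
    intro x y
    apply mul_right_cancel' (a := s)
    rw [inv_mul_cancel_right', hs.a3 x (y * s⁻¹), inv_mul_cancel_right']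
  have ha2 : ∀ x y : L, (x * s⁻¹) * y = x * (s⁻¹ * y) := by
    intro x y
    rw [hswap y, ← ha3 x y, ← hswap x, ha1 x y]
    exact hswap (x * y)
  constructor
  · intro x; exact comm_eq_one_of (hswap x)
  · intro x y
    exact ⟨assoc_eq_one_of (ha1 x y), assoc_eq_one_of (ha2 x y), assoc_eq_one_of (ha3 x y)⟩

theorem inCenter.cancel₂ {s t : L} (hs : inCenter s) (ht : inCenter t) (u : L) :
    (u * s)⁻¹ * (u * t) = s⁻¹ * t := by
  rw [mul_inv_rev', hs.inv.a1 u⁻¹ (u * t), IPLoop.inv_mul_cancel_left]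

end IPLoop

namespace IPLoop
variable {L : Type*} [IPLoop L]

theorem inCenter.inv_mul_self {s : L} (hs : inCenter s) (u : L) : (u * s)⁻¹ * u = s⁻¹ := by
  rw [mul_inv_rev', hs.inv.a1, inv_mul, IPLoop.mul_one]

theorem inCenter.cancel₃ {s : L} (hs : inCenter s) (u v : L) :
    (u * s)⁻¹ * (v * s) = u⁻¹ * v := by
  rw [mul_inv_rev', hs.inv.a1, hs.shift4 u⁻¹ v, ← hs.swap (u⁻¹ * v),
    IPLoop.inv_mul_cancel_left]

section Mouf
variable (hM : IsMoufang L) (hA : ∀ x y z : L, inCenter (assoc x y z))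
  (hK : ∀ x y : L, inCenter (comm x y))
include hM hA hK

theorem flex (x y : L) : assoc x y x = 1 := by
  apply assoc_eq_one_of
  have h := hM x 1 y
  rwa [IPLoop.one_mul, IPLoop.one_mul] at h

theorem ra (x y : L) : assoc x y y = 1 := by
  apply assoc_eq_one_of
  have h := hM y x 1
  rwa [IPLoop.mul_one, IPLoop.one_mul] at h

theorem la (x y : L) : assoc x x y = 1 := by
  apply assoc_eq_one_of
  have h1 : (y⁻¹ * x⁻¹) * x⁻¹ = y⁻¹ * (x⁻¹ * x⁻¹) :=
    mul_assoc_of_assoc_eq_one (ra hM hA hK y⁻¹ x⁻¹)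
  have h2 := congrArg (fun t => t⁻¹) h1
  simp only [mul_inv_rev', inv_inv'] at h2
  exact h2.symm

theorem mstar (d c e : L) : assoc d (c * e) c = (assoc d c e)⁻¹ := by
  have chain : ((d*c)*e)*c = ((d*(c*(e*c))) * assoc d (c*e) c) * assoc d c e := by
    rw [assoc_spec d c e, (hA d c e).shift1, assoc_spec d (c*e) c,
      mul_assoc_of_assoc_eq_one (flex hM hA hK c e)]
  have e5 : ((d*(c*(e*c))) * assoc d (c*e) c) * assoc d c e = d*(c*(e*c)) :=
    chain.symm.trans (hM c d e)
  have e6 : (d*(c*(e*c))) * (assoc d (c*e) c * assoc d c e) = (d*(c*(e*c))) * 1 := by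
    rw [IPLoop.mul_one, ← (hA d c e).a3]
    exact e5
  have e8 := eq_inv_of_mul_eq_one (mul_left_cancel' e6)
  rw [e8, inv_inv']

theorem i1 (x y z : L) : assoc x (y * z) z⁻¹ = (assoc x y z)⁻¹ := by
  have h2 : ((x*y)*z)*z⁻¹ = ((x*(y*z))*z⁻¹) * assoc x y z := by
    rw [assoc_spec x y z, (hA x y z).shift1]
  have key : ((x*(y*z))*z⁻¹) * assoc x y z = x*y := by
    rw [← h2]; exact IPLoop.mul_inv_cancel_right z (x*y)
  have h4 := IPLoop.mul_inv_cancel_right (assoc x y z) ((x*(y*z))*z⁻¹)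
  rw [key] at h4
  show (x*((y*z)*z⁻¹))⁻¹ * ((x*(y*z))*z⁻¹) = (assoc x y z)⁻¹
  rw [IPLoop.mul_inv_cancel_right z y, ← h4]
  exact IPLoop.inv_mul_cancel_left (x*y) _

theorem i2 (x y z : L) : assoc x⁻¹ (x * y) z = (assoc x y z)⁻¹ := by
  have h1 : x⁻¹*((x*y)*z) = (y*z) * assoc x y z := by
    rw [assoc_spec x y z, (hA x y z).shift4, IPLoop.inv_mul_cancel_left]
  show (x⁻¹*((x*y)*z))⁻¹ * ((x⁻¹*(x*y))*z) = (assoc x y z)⁻¹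
  rw [h1, IPLoop.inv_mul_cancel_left]
  exact (hA x y z).inv_mul_self (y*z)

theorem jlem (x y z : L) : assoc z⁻¹ y⁻¹ x⁻¹ = assoc x y z := by
  have h0 := congrArg (fun t => t⁻¹) (assoc_spec x y z)
  simp only [mul_inv_rev'] at h0
  have h1 : z⁻¹*(y⁻¹*x⁻¹) = ((z⁻¹*y⁻¹)*x⁻¹) * (assoc x y z)⁻¹ :=
    h0.trans ((hA x y z).inv.swap ((z⁻¹*y⁻¹)*x⁻¹))
  have h2 : z⁻¹*(y⁻¹*x⁻¹) =
      (z⁻¹*(y⁻¹*x⁻¹)) * (assoc z⁻¹ y⁻¹ x⁻¹ * (assoc x y z)⁻¹) := by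
    conv_lhs => rw [h1]
    rw [assoc_spec z⁻¹ y⁻¹ x⁻¹, (hA x y z).inv.a3]
  have h3 : assoc z⁻¹ y⁻¹ x⁻¹ * (assoc x y z)⁻¹ = 1 := by
    apply mul_left_cancel' (a := z⁻¹*(y⁻¹*x⁻¹))
    rw [IPLoop.mul_one, ← h2]
  have h4 := eq_inv_of_mul_eq_one h3
  have h5 := congrArg (fun t => t⁻¹) h4
  simpa [inv_inv'] using h5.symm

theorem m1 (x y z : L) : assoc x (y * x) z = (assoc y x z)⁻¹ := by
  have h := mstar hM hA hK z⁻¹ x⁻¹ y⁻¹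
  rw [show x⁻¹*y⁻¹ = (y*x)⁻¹ from (mul_inv_rev' y x).symm] at h
  rw [jlem hM hA hK x (y*x) z, jlem hM hA hK y x z] at h
  exact h

theorem e1' (d u c : L) : assoc d u c = assoc d u (u⁻¹ * c) := by
  have h1 := (mstar hM hA hK d c (c⁻¹*u)).trans (i1 hM hA hK d c (c⁻¹*u)).symm
  rwa [mul_inv_cancel_left', mul_inv_rev', inv_inv'] at h1

theorem e2 (d u c : L) : assoc d u (u * c) = assoc d u c := by
  have h := e1' hM hA hK d u (u*c)
  rw [IPLoop.inv_mul_cancel_left] at h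
  exact h

theorem e2' (c u d : L) : assoc (c * u) u d = assoc c u d := by
  have h := e2 hM hA hK d⁻¹ u⁻¹ c⁻¹
  rw [show u⁻¹*c⁻¹ = (c*u)⁻¹ from (mul_inv_rev' c u).symm] at h
  rw [jlem hM hA hK (c*u) u d, jlem hM hA hK c u d] at h
  exact h

theorem s12 (x y z : L) : assoc x y z = (assoc y x z)⁻¹ := by
  have h1 := m1 hM hA hK x (y*x⁻¹) z
  rw [inv_mul_cancel_right'] at h1
  have h2 := e2' hM hA hK (y*x⁻¹) x z
  rw [inv_mul_cancel_right'] at h2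
  rw [h1, h2]

theorem s23 (d c e : L) : assoc d e c = (assoc d c e)⁻¹ := by
  have h1 := mstar hM hA hK d c (c⁻¹*e)
  rw [mul_inv_cancel_left'] at h1
  rw [h1, ← e1' hM hA hK d c e]

theorem cyc (x y z : L) : assoc x y z = assoc y z x := by
  rw [s12 hM hA hK x y z, s23 hM hA hK y x z]

end Mouf
end IPLoop

namespace IPLoop
variable {L : Type*} [IPLoop L]

/-- The set of central elements, as a type. -/
def Ctr (L : Type*) [IPLoop L] := {s : L // inCenter s}

instance : CommGroup (Ctr L) where
  mul a b := ⟨a.1 * b.1, a.2.mul b.2⟩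
  one := ⟨1, inCenter_one⟩
  inv a := ⟨a.1⁻¹, a.2.inv⟩
  mul_assoc a b c := Subtype.ext (c.2.a3 a.1 b.1)
  one_mul a := Subtype.ext (IPLoop.one_mul a.1)
  mul_one a := Subtype.ext (IPLoop.mul_one a.1)
  inv_mul_cancel a := Subtype.ext (inv_mul a.1)
  mul_comm a b := Subtype.ext (a.2.swap b.1)

@[simp] theorem Ctr.coe_mul (a b : Ctr L) : (a * b).1 = a.1 * b.1 := rfl
@[simp] theorem Ctr.coe_inv (a : Ctr L) : (a⁻¹).1 = (a.1)⁻¹ := rfl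
@[simp] theorem Ctr.coe_one : (1 : Ctr L).1 = 1 := rfl

theorem assoc_mul_central {s : L} (hs : inCenter s) (x y z : L) :
    assoc (x * s) y z = assoc x y z := by
  show ((x*s)*(y*z))⁻¹ * (((x*s)*y)*z) = _
  rw [hs.shift1 x (y*z), hs.shift1 x y, hs.shift1 (x*y) z]
  exact hs.cancel₃ _ _

theorem comm_mul_central_left {s : L} (hs : inCenter s) (x y : L) :
    comm (x * s) y = comm x y := by
  show (y*(x*s))⁻¹ * ((x*s)*y) = _
  rw [hs.shift4 y x, hs.shift1 x y]
  exact hs.cancel₃ _ _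

theorem comm_mul_central_right {s : L} (hs : inCenter s) (x y : L) :
    comm x (y * s) = comm x y := by
  show ((y*s)*x)⁻¹ * (x*(y*s)) = _
  rw [hs.shift1 y x, hs.shift4 x y]
  exact hs.cancel₃ _ _

theorem comm_one_left (z : L) : comm 1 z = 1 := by
  unfold comm; rw [IPLoop.mul_one, IPLoop.one_mul, inv_mul]

/-- central associator as an element of `Ctr L` -/
def ctrA (hA : ∀ x y z : L, inCenter (assoc x y z)) (x y z : L) : Ctr L :=
  ⟨assoc x y z, hA x y z⟩

/-- central commutator as an element of `Ctr L` -/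
def ctrK (hK : ∀ x y : L, inCenter (comm x y)) (x y : L) : Ctr L :=
  ⟨comm x y, hK x y⟩

section Mouf2
variable (hM : IsMoufang L) (hA : ∀ x y z : L, inCenter (assoc x y z))
  (hK : ∀ x y : L, inCenter (comm x y))
include hM hA hK

theorem assoc_mul_central2 {s : L} (hs : inCenter s) (x y z : L) :
    assoc x (y * s) z = assoc x y z := by
  rw [cyc hM hA hK x (y*s) z, assoc_mul_central hs y z x, ← cyc hM hA hK x y z]

theorem assoc_mul_central3 {s : L} (hs : inCenter s) (x y z : L) :
    assoc x y (z * s) = assoc x y z := by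
  rw [cyc hM hA hK x y (z*s), assoc_mul_central2 hM hA hK hs y z x, ← cyc hM hA hK x y z]

theorem chain1 (x y z w : L) : ((x*y)*z)*w =
    (((x*(y*(z*w))) * assoc y z w) * assoc x (y*z) w) * assoc x y z := by
  rw [assoc_spec x y z, (hA x y z).shift1, assoc_spec x (y*z) w, assoc_spec y z w,
    (hA y z w).shift4]

theorem chain2 (x y z w : L) : ((x*y)*z)*w =
    ((x*(y*(z*w))) * assoc x y (z*w)) * assoc (x*y) z w := by
  rw [assoc_spec (x*y) z w, assoc_spec x y (z*w)]

theorem co_ctr (x y z w : L) :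
    ctrA hA x y (z*w) * ctrA hA (x*y) z w =
      ctrA hA y z w * ctrA hA x (y*z) w * ctrA hA x y z := by
  apply Subtype.ext
  show assoc x y (z*w) * assoc (x*y) z w =
    (assoc y z w * assoc x (y*z) w) * assoc x y z
  apply mul_left_cancel' (a := x*(y*(z*w)))
  rw [← (hA (x*y) z w).a3, ← (hA x y z).a3, ← (hA x (y*z) w).a3]
  exact (chain2 hM hA hK x y z w).symm.trans (chain1 hM hA hK x y z w)

theorem Acyc (x y z : L) : ctrA hA x y z = ctrA hA y z x :=
  Subtype.ext (cyc hM hA hK x y z)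

end Mouf2
end IPLoop

namespace IPLoop
variable {L : Type*} [IPLoop L]

theorem pow_zero_def (x : L) : x^(0:ℕ) = 1 := rfl
theorem pow_succ_def (x : L) (n : ℕ) : x^(n+1) = x * x^n := rfl
theorem pow_one_def (x : L) : x^(1:ℕ) = x := by
  rw [pow_succ_def, pow_zero_def, IPLoop.mul_one]

theorem inCenter.pow {s : L} (hs : inCenter s) (n : ℕ) : inCenter (s^n) := by
  induction n with
  | zero => exact inCenter_one
  | succ n ih => rw [pow_succ_def]; exact hs.mul ih

/-- the central-associator and central-commutator maps, into `Ctr L` -/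
def ctrD (hA : ∀ x y z : L, inCenter (assoc x y z)) (x y z w : L) : Ctr L :=
  ctrA hA (x*y) z w * (ctrA hA x z w)⁻¹ * (ctrA hA y z w)⁻¹

section Mouf3
variable (hM : IsMoufang L) (hA : ∀ x y z : L, inCenter (assoc x y z))
  (hK : ∀ x y : L, inCenter (comm x y))
include hM hA hK

theorem As12 (x y z : L) : ctrA hA x y z = (ctrA hA y x z)⁻¹ :=
  Subtype.ext (s12 hM hA hK x y z)
theorem As23 (x y z : L) : ctrA hA x y z = (ctrA hA x z y)⁻¹ :=
  Subtype.ext (s23 hM hA hK x z y)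
theorem Aflex (x y : L) : ctrA hA x y x = 1 := Subtype.ext (flex hM hA hK x y)
theorem Ara (x y : L) : ctrA hA x y y = 1 := Subtype.ext (ra hM hA hK x y)
theorem Ala (x y : L) : ctrA hA x x y = 1 := Subtype.ext (la hM hA hK x y)
theorem Aone1 (y z : L) : ctrA hA 1 y z = 1 := Subtype.ext (assoc_one_left y z)
theorem Acomm1 (x y z w : L) : ctrA hA (x*y) z w = ctrA hA (y*x) z w := by
  apply Subtype.ext
  show assoc (x*y) z w = assoc (y*x) z w
  rw [comm_spec x y]
  exact assoc_mul_central (hK x y) (y*x) z w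

theorem Dexpand (x y z w : L) :
    ctrA hA (x*y) z w = ctrD hA x y z w * (ctrA hA x z w * ctrA hA y z w) := by
  unfold ctrD
  rw [mul_assoc (ctrA hA (x*y) z w * (ctrA hA x z w)⁻¹) ((ctrA hA y z w)⁻¹) _,
    mul_comm (ctrA hA x z w) (ctrA hA y z w), _root_.inv_mul_cancel_left, _root_.inv_mul_cancel_right]

theorem co' (x y z w : L) :
    ctrD hA z w x y * ctrD hA x y z w = ctrD hA y z w x := by
  have h := co_ctr hM hA hK x y z w
  rw [(Acyc hM hA hK x y (z*w)).trans (Acyc hM hA hK y (z*w) x),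
      Acyc hM hA hK x (y*z) w] at h
  rw [Dexpand hM hA hK z w x y, Dexpand hM hA hK x y z w, Dexpand hM hA hK y z w x] at h
  rw [Acyc hM hA hK z x y, Acyc hM hA hK w x y, Acyc hM hA hK y w x, Acyc hM hA hK w x y,
      Acyc hM hA hK z w x, Acyc hM hA hK w x z] at h
  apply mul_right_cancel
    (b := ctrA hA x y z * ctrA hA x y w * ctrA hA x z w * ctrA hA y z w)
  calc ctrD hA z w x y * ctrD hA x y z w *
        (ctrA hA x y z * ctrA hA x y w * ctrA hA x z w * ctrA hA y z w)
      = ctrD hA z w x y * (ctrA hA x y z * ctrA hA x y w) *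
        (ctrD hA x y z w * (ctrA hA x z w * ctrA hA y z w)) := by
        simp only [mul_comm, mul_left_comm, mul_assoc]
    _ = ctrA hA y z w * (ctrD hA y z w x * (ctrA hA x y w * ctrA hA x z w)) *
        ctrA hA x y z := h
    _ = ctrD hA y z w x *
        (ctrA hA x y z * ctrA hA x y w * ctrA hA x z w * ctrA hA y z w) := by
        simp only [mul_comm, mul_left_comm, mul_assoc]

theorem Dswap (a b c d : L) : ctrD hA a b c d = ctrD hA c d a b := by
  have h1 := co' hM hA hK d a b c
  have h2 := co' hM hA hK b c d a
  rw [mul_comm] at h2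
  exact h1.symm.trans h2

theorem Dsym1 (x y z w : L) : ctrD hA x y z w = ctrD hA y x z w := by
  unfold ctrD
  rw [Acomm1 hM hA hK x y z w, mul_right_comm]

theorem Dskew (x y z w : L) : ctrD hA x y z w = (ctrD hA x y w z)⁻¹ := by
  unfold ctrD
  rw [As23 hM hA hK (x*y) z w, As23 hM hA hK x z w, As23 hM hA hK y z w]
  simp only [inv_inv, mul_inv_rev]
  simp only [mul_comm, mul_left_comm, mul_assoc]

theorem Dsq (x y z w : L) : ctrD hA x y z w * ctrD hA x y z w = 1 := by
  have h1 : ctrD hA x y z w = ctrD hA x y w z := by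
    rw [Dswap hM hA hK x y z w, Dsym1 hM hA hK z w x y, Dswap hM hA hK w z x y]
  have h2 := Dskew hM hA hK x y z w
  rw [← h1] at h2
  nth_rewrite 2 [h2]
  exact mul_inv_cancel _

theorem Dtriv (x y z w : L) : ctrD hA x y z w = 1 := by
  have h := co' hM hA hK w x y z
  rw [show ctrD hA w x y z = ctrD hA y z w x from Dswap hM hA hK w x y z] at h
  rw [Dsq hM hA hK y z w x] at h
  exact h.symm

theorem Amul1 (x y z w : L) : ctrA hA (x*y) z w = ctrA hA x z w * ctrA hA y z w := by
  have h := Dexpand hM hA hK x y z w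
  rwa [Dtriv hM hA hK, _root_.one_mul] at h

theorem Amul2 (x y z w : L) : ctrA hA x (y*z) w = ctrA hA x y w * ctrA hA x z w := by
  rw [Acyc hM hA hK x (y*z) w, Amul1 hM hA hK y z w x, Acyc hM hA hK y w x,
    Acyc hM hA hK w x y, Acyc hM hA hK z w x, Acyc hM hA hK w x z]

theorem Amul3 (x y z w : L) : ctrA hA x y (z*w) = ctrA hA x y z * ctrA hA x y w := by
  rw [Acyc hM hA hK x y (z*w), Amul2 hM hA hK y z w x, Acyc hM hA hK y z x,
    Acyc hM hA hK z x y, Acyc hM hA hK y w x, Acyc hM hA hK w x y]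

theorem Ainv1 (x z w : L) : ctrA hA x⁻¹ z w = (ctrA hA x z w)⁻¹ := by
  have h := Amul1 hM hA hK x x⁻¹ z w
  rw [mul_inv, Aone1 hM hA hK] at h
  exact (inv_eq_of_mul_eq_one_right h.symm).symm

theorem Apow1 (x z w : L) (n : ℕ) : ctrA hA (x^n) z w = (ctrA hA x z w)^n := by
  induction n with
  | zero => rw [pow_zero_def, Aone1 hM hA hK, pow_zero]
  | succ n ih => rw [pow_succ_def, Amul1 hM hA hK, ih, pow_succ']

theorem Apow2 (x y w : L) (n : ℕ) : ctrA hA x (y^n) w = (ctrA hA x y w)^n := by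
  rw [Acyc hM hA hK x (y^n) w, Apow1 hM hA hK y w x, Acyc hM hA hK y w x,
    Acyc hM hA hK w x y]

theorem Apow3 (x y z : L) (n : ℕ) : ctrA hA x y (z^n) = (ctrA hA x y z)^n := by
  rw [Acyc hM hA hK x y (z^n), Apow2 hM hA hK y z x, Acyc hM hA hK y z x,
    Acyc hM hA hK z x y]

theorem ctrA_eq_one {x y z : L} (h : ctrA hA x y z = 1) : assoc x y z = 1 :=
  congrArg Subtype.val h

theorem assoc_pow_mid (x w : L) (n : ℕ) : assoc x (x^n) w = 1 := by
  apply ctrA_eq_one hM hA hK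
  rw [Apow2 hM hA hK, Ala hM hA hK, one_pow]

theorem assoc_pow_flex (x : L) (m n : ℕ) : assoc x (x^m) (x^n) = 1 := by
  apply ctrA_eq_one hM hA hK
  rw [Apow2 hM hA hK, Ala hM hA hK, one_pow]

theorem pow_comm_self (x : L) (n : ℕ) : x^n * x = x * x^n := by
  induction n with
  | zero => rw [pow_zero_def, IPLoop.one_mul, IPLoop.mul_one]
  | succ n ih =>
    rw [pow_succ_def, mul_assoc_of_assoc_eq_one (flex hM hA hK x (x^n)), ih]

theorem pow_succ_r (x : L) (n : ℕ) : x^n * x = x^(n+1) := by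
  rw [pow_comm_self hM hA hK, pow_succ_def]

theorem pow_add' (x : L) (m n : ℕ) : x^m * x^n = x^(m+n) := by
  induction m with
  | zero => rw [pow_zero_def, IPLoop.one_mul, Nat.zero_add]
  | succ m ih =>
    rw [pow_succ_def, mul_assoc_of_assoc_eq_one (assoc_pow_mid hM hA hK x (x^n) m), ih,
      ← pow_succ_def, Nat.succ_add]

theorem pow_mul' (x : L) (m n : ℕ) : (x^m)^n = x^(m*n) := by
  induction n with
  | zero => rw [Nat.mul_zero, pow_zero_def, pow_zero_def]
  | succ n ih =>
    rw [pow_succ_def, ih, pow_add' hM hA hK, Nat.mul_succ, Nat.add_comm]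

theorem inv_pow' (x : L) (n : ℕ) : (x⁻¹)^n = (x^n)⁻¹ := by
  induction n with
  | zero => rw [pow_zero_def, pow_zero_def, inv_one']
  | succ n ih =>
    rw [pow_succ_def, ih, ← mul_inv_rev', pow_succ_r hM hA hK]

theorem Ctr.coe_pow (a : Ctr L) (n : ℕ) : (a^n).1 = (a.1)^n := by
  induction n with
  | zero => rw [pow_zero, pow_zero_def]; rfl
  | succ n ih => rw [pow_succ, Ctr.coe_mul, ih, pow_succ_r hM hA hK]

theorem central_mul_pow {s : L} (hs : inCenter s) (x : L) (n : ℕ) :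
    (x*s)^n = x^n * s^n := by
  induction n with
  | zero => rw [pow_zero_def, pow_zero_def, pow_zero_def, IPLoop.mul_one]
  | succ n ih =>
    rw [pow_succ_def, ih, hs.shift1, (hs.pow n).shift4, hs.a3, pow_succ_r hM hA hK,
      ← pow_succ_def]

end Mouf3
end IPLoop

namespace IPLoop
variable {L : Type*} [IPLoop L]

theorem Kskew (hK : ∀ x y : L, inCenter (comm x y)) (a b : L) :
    ctrK hK a b = (ctrK hK b a)⁻¹ := Subtype.ext (comm_skew b a)

theorem Kone (hK : ∀ x y : L, inCenter (comm x y)) (z : L) :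
    ctrK hK 1 z = 1 := Subtype.ext (comm_one_left z)

section Mouf4
variable (hM : IsMoufang L) (hA : ∀ x y z : L, inCenter (assoc x y z))
  (hK : ∀ x y : L, inCenter (comm x y))
include hM hA hK

theorem Ainv2 (x y z : L) : ctrA hA x y⁻¹ z = (ctrA hA x y z)⁻¹ := by
  rw [Acyc hM hA hK x y⁻¹ z, Ainv1 hM hA hK, Acyc hM hA hK y z x, Acyc hM hA hK z x y]

theorem Ainv3 (x y z : L) : ctrA hA x y z⁻¹ = (ctrA hA x y z)⁻¹ := by
  rw [Acyc hM hA hK x y z⁻¹, Ainv2 hM hA hK, Acyc hM hA hK y z x, Acyc hM hA hK z x y]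

theorem comm_mul_left_expand (x y z : L) :
    comm (x*y) z =
      (((comm z y * assoc x z y) * comm z x) * (assoc z x y)⁻¹)⁻¹ * assoc x y z := by
  have hz1 : z*(x*y) = ((z*x)*y) * (assoc z x y)⁻¹ := by
    have h := IPLoop.mul_inv_cancel_right (assoc z x y) (z*(x*y))
    rw [← assoc_spec z x y] at h
    exact h.symm
  have hz : z*(x*y) =
      (x*(y*z)) * (((comm z y * assoc x z y) * comm z x) * (assoc z x y)⁻¹) := by
    calc z*(x*y) = ((z*x)*y) * (assoc z x y)⁻¹ := hz1
    _ = (((x*z)*y) * comm z x) * (assoc z x y)⁻¹ := by rw [comm_spec z x, (hK z x).shift1]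
    _ = (((x*(z*y)) * assoc x z y) * comm z x) * (assoc z x y)⁻¹ := by rw [assoc_spec x z y]
    _ = ((((x*(y*z)) * comm z y) * assoc x z y) * comm z x) * (assoc z x y)⁻¹ := by
        rw [comm_spec z y, (hK z y).shift4]
    _ = (x*(y*z)) * (((comm z y * assoc x z y) * comm z x) * (assoc z x y)⁻¹) := by
        rw [(hA x z y).a3, (hK z x).a3, (hA z x y).inv.a3]
  show (z*(x*y))⁻¹ * ((x*y)*z) = _
  rw [hz, assoc_spec x y z]
  exact ((((hK z y).mul (hA x z y)).mul (hK z x)).mul (hA z x y).inv).cancel₂ (hA x y z) _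

theorem Kmul (x y z : L) :
    ctrK hK (x*y) z = ctrK hK x z * ctrK hK y z * (ctrA hA x y z)^(3:ℕ) := by
  have h : ctrK hK (x*y) z =
      (ctrK hK z y * ctrA hA x z y * ctrK hK z x * (ctrA hA z x y)⁻¹)⁻¹ * ctrA hA x y z :=
    Subtype.ext (comm_mul_left_expand hM hA hK x y z)
  rw [h, Kskew hK z y, Kskew hK z x, As23 hM hA hK x z y, Acyc hM hA hK z x y]
  simp only [mul_inv_rev, inv_inv, pow_succ, pow_zero, _root_.one_mul]
  simp only [mul_comm, mul_left_comm, mul_assoc]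

theorem Kinv1 (x z : L) : ctrK hK x⁻¹ z = (ctrK hK x z)⁻¹ := by
  have h := Kmul hM hA hK x x⁻¹ z
  rw [mul_inv, Kone hK, As23 hM hA hK x x⁻¹ z, Ainv3 hM hA hK, inv_inv,
    Aflex hM hA hK, one_pow, _root_.mul_one] at h
  exact (inv_eq_of_mul_eq_one_right h.symm).symm

theorem Kpow1 (x z : L) (n : ℕ) : ctrK hK (x^n) z = (ctrK hK x z)^n := by
  induction n with
  | zero => rw [pow_zero_def, Kone hK, pow_zero]
  | succ n ih =>
    rw [pow_succ_def, Kmul hM hA hK, ih, Apow2 hM hA hK, Ala hM hA hK, one_pow, one_pow,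
      _root_.mul_one, pow_succ']

theorem Kpow2 (x y : L) (n : ℕ) : ctrK hK x (y^n) = (ctrK hK x y)^n := by
  rw [Kskew hK x (y^n), Kpow1 hM hA hK, ← inv_pow, ← Kskew hK x y]

theorem comm_pow_right (y x : L) (n : ℕ) : comm y (x^n) = (comm y x)^n := by
  have h := congrArg Subtype.val (Kpow2 hM hA hK y x n)
  rwa [Ctr.coe_pow hM hA hK] at h

theorem mul_pow_formula (x y : L) (n : ℕ) :
    (x*y)^n = (x^n * y^n) * (comm y x)^(n.choose 2) := by
  induction n with
  | zero =>
    show (1:L) = (1*1) * (comm y x)^(Nat.choose 0 2)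
    rw [show Nat.choose 0 2 = 0 from rfl, pow_zero_def, IPLoop.mul_one, IPLoop.mul_one]
  | succ n ih =>
    have hc1 : assoc x y (x^n * y^n) = 1 := ctrA_eq_one hM hA hK (by
      rw [Amul3 hM hA hK, Apow3 hM hA hK, Apow3 hM hA hK, Aflex hM hA hK, Ara hM hA hK,
        one_pow, _root_.one_mul])
    have hc2 : assoc y (x^n) (y^n) = 1 := ctrA_eq_one hM hA hK (by
      rw [Apow2 hM hA hK, Apow3 hM hA hK, Aflex hM hA hK, one_pow, one_pow])
    have hc3 : assoc (x^n) y (y^n) = 1 := ctrA_eq_one hM hA hK (by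
      rw [Apow1 hM hA hK, Apow3 hM hA hK, Ara hM hA hK, one_pow, one_pow])
    have hc4 : assoc x (x^n) (y^(n+1)) = 1 := assoc_pow_mid hM hA hK x (y^(n+1)) n
    have hcomm : y * x^n = (x^n * y) * (comm y x)^n := by
      rw [comm_spec y (x^n), comm_pow_right hM hA hK]
    have hkc : inCenter ((comm y x)^n) := (hK y x).pow n
    have hK2 : inCenter ((comm y x)^(n.choose 2)) := (hK y x).pow _
    calc (x*y)^(n+1) = (x*y) * ((x^n*y^n) * (comm y x)^(n.choose 2)) := by
          rw [pow_succ_def, ih]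
    _ = ((x*y) * (x^n*y^n)) * (comm y x)^(n.choose 2) := by rw [hK2.shift4]
    _ = (x * (y * (x^n*y^n))) * (comm y x)^(n.choose 2) := by
          rw [mul_assoc_of_assoc_eq_one hc1]
    _ = (x * ((y*x^n) * y^n)) * (comm y x)^(n.choose 2) := by
          rw [← mul_assoc_of_assoc_eq_one hc2]
    _ = (x * (((x^n*y) * (comm y x)^n) * y^n)) * (comm y x)^(n.choose 2) := by rw [hcomm]
    _ = (x * (((x^n*y) * y^n) * (comm y x)^n)) * (comm y x)^(n.choose 2) := by
          rw [hkc.shift1]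
    _ = (x * ((x^n*(y*y^n)) * (comm y x)^n)) * (comm y x)^(n.choose 2) := by
          rw [mul_assoc_of_assoc_eq_one hc3]
    _ = ((x * (x^n*y^(n+1))) * (comm y x)^n) * (comm y x)^(n.choose 2) := by
          rw [← pow_succ_def y n, hkc.shift4]
    _ = (((x*x^n) * y^(n+1)) * (comm y x)^n) * (comm y x)^(n.choose 2) := by
          rw [← mul_assoc_of_assoc_eq_one hc4]
    _ = ((x^(n+1) * y^(n+1)) * (comm y x)^n) * (comm y x)^(n.choose 2) := by
          rw [← pow_succ_def x n]
    _ = (x^(n+1) * y^(n+1)) * ((comm y x)^n * (comm y x)^(n.choose 2)) := by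
          rw [hK2.a3]
    _ = (x^(n+1) * y^(n+1)) * (comm y x)^((n+1).choose 2) := by
          rw [pow_add' hM hA hK,
            show n + n.choose 2 = (n+1).choose 2 by
              rw [Nat.choose_succ_succ n 1, Nat.choose_one_right]]

end Mouf4
end IPLoop

namespace IPLoop

theorem moufang_of_coded {p : ℕ} (L : Type) [IPLoop L] (C : Type) [instC : CommGroup C]
    (V : CVSData p C) (E : CodedExtension p C V L) : IsMoufang L := by
  have hι1 : E.ι 1 = 1 := by
    have h := E.ι_mul 1 1
    rw [_root_.mul_one] at h
    have h2 : E.ι 1 * (1:L) = E.ι 1 * E.ι 1 := by rw [IPLoop.mul_one]; exact h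
    exact (mul_left_cancel' h2).symm
  have hA : ∀ x y z : L, inCenter (assoc x y z) := by
    intro x y z; rw [E.assoc_eq]; exact E.ι_central _
  intro c d e
  have h3 : assoc c e c = 1 := by
    rw [E.assoc_eq, (V.α_skew _ _ _).2, (V.α_symp _ _).1]
    exact hι1
  have key : assoc d (c*e) c * assoc d c e = 1 := by
    rw [E.assoc_eq d (c*e) c, E.assoc_eq d c e, E.π_mul c e, ← E.ι_mul]
    rw [show V.α (E.π d) (E.π c * E.π e) (E.π c) * V.α (E.π d) (E.π c) (E.π e) = 1 by
      rw [(V.α_skew (E.π d) (E.π c * E.π e) (E.π c)).2,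
        V.α_mul (E.π c) (E.π e) (E.π c) (E.π d),
        (V.α_symp (E.π d) (E.π c)).2.2, _root_.one_mul,
        (V.α_skew (E.π d) (E.π c) (E.π e)).2,
        (V.α_skew (E.π c) (E.π e) (E.π d)).1]
      exact mul_inv_cancel _]
    exact hι1
  calc ((d*c)*e)*c = ((d*(c*e)) * assoc d c e)*c := by rw [← assoc_spec d c e]
  _ = ((d*(c*e))*c) * assoc d c e := (hA d c e).shift1 _ _
  _ = ((d*((c*e)*c)) * assoc d (c*e) c) * assoc d c e := by rw [← assoc_spec d (c*e) c]
  _ = ((d*(c*(e*c))) * assoc d (c*e) c) * assoc d c e := by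
      rw [mul_assoc_of_assoc_eq_one h3]
  _ = (d*(c*(e*c))) * (assoc d (c*e) c * assoc d c e) := (hA d c e).a3 _ _
  _ = d*(c*(e*c)) := by rw [key, IPLoop.mul_one]

end IPLoop

namespace IPLoop

/-- Bundled hypotheses for part (i). -/
class CentralData (p : outParam ℕ) (L : Type) [IPLoop L] (Z : Set L) : Prop where
  prime : p.Prime
  mou : IsMoufang L
  fin : Finite L
  one_mem : (1:L) ∈ Z
  inv_mem : ∀ z ∈ Z, z⁻¹ ∈ Z
  mul_mem : ∀ z ∈ Z, ∀ w ∈ Z, z * w ∈ Z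
  central : ∀ z ∈ Z, inCenter z
  card : Nat.card Z = p
  pow_mem : ∀ c : L, c ^ p ∈ Z
  comm_mem : ∀ c d : L, comm c d ∈ Z
  assoc_mem : ∀ c d e : L, assoc c d e ∈ Z

namespace CentralData
section Basic
variable {p : ℕ} {L : Type} [IPLoop L] {Z : Set L} [h : CentralData p L Z]
include h

theorem hA : ∀ x y z : L, inCenter (assoc x y z) :=
  fun x y z => h.central _ (h.assoc_mem x y z)
theorem hK : ∀ x y : L, inCenter (comm x y) :=
  fun x y => h.central _ (h.comm_mem x y)

instance zgroup : CommGroup ↥Z where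
  mul a b := ⟨a.1 * b.1, h.mul_mem _ a.2 _ b.2⟩
  one := ⟨1, h.one_mem⟩
  inv a := ⟨a.1⁻¹, h.inv_mem _ a.2⟩
  mul_assoc a b c := Subtype.ext ((h.central _ c.2).a3 a.1 b.1)
  one_mul a := Subtype.ext (IPLoop.one_mul a.1)
  mul_one a := Subtype.ext (IPLoop.mul_one a.1)
  inv_mul_cancel a := Subtype.ext (inv_mul a.1)
  mul_comm a b := Subtype.ext ((h.central _ a.2).swap b.1)

theorem zcoe_mul (a b : ↥Z) : ((a * b : ↥Z) : L) = (a : L) * (b : L) := rfl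

theorem zcoe_pow (a : ↥Z) (n : ℕ) : ((a ^ n : ↥Z) : L) = (a : L) ^ n := by
  induction n with
  | zero => rw [pow_zero, pow_zero_def]; rfl
  | succ n ih => rw [pow_succ, zcoe_mul, ih, pow_succ_r h.mou (hA (Z := Z)) (hK (Z := Z))]

theorem zpow_card (a : ↥Z) : a ^ p = 1 := by
  haveI := h.fin
  haveI : Finite ↥Z := Subtype.finite
  exact orderOf_dvd_iff_pow_eq_one.mp (h.card ▸ orderOf_dvd_natCard a)

theorem mem_pow_card {s : L} (hs : s ∈ Z) : s ^ p = 1 := by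
  have h2 := congrArg Subtype.val (zpow_card (Z := Z) (⟨s, hs⟩ : ↥Z))
  rwa [zcoe_pow] at h2

theorem iscyc : IsCyclic ↥Z := by
  haveI : Fact p.Prime := ⟨h.prime⟩
  exact isCyclic_of_prime_card h.card

end Basic

section Gen
variable (p : ℕ) (L : Type) [IPLoop L] (Z : Set L) [h : CentralData p L Z]
include h

/-- a generator of `Z` -/
noncomputable def gen : ↥Z :=
  haveI : IsCyclic ↥Z := iscyc (p := p)
  (IsCyclic.exists_generator (α := ↥Z)).choose

theorem gen_spec : ∀ a : ↥Z, a ∈ Subgroup.zpowers (gen p L Z) :=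
  haveI : IsCyclic ↥Z := iscyc (p := p)
  (IsCyclic.exists_generator (α := ↥Z)).choose_spec

theorem orderOf_gen : orderOf (gen p L Z) = p := by
  haveI := h.fin
  haveI : Finite ↥Z := Subtype.finite
  have htop : Subgroup.zpowers (gen p L Z) = ⊤ :=
    (Subgroup.eq_top_iff' _).mpr (gen_spec p L Z)
  rw [← Nat.card_zpowers, htop, Subgroup.card_top]
  exact h.card

/-- the embedding of `Multiplicative (ZMod p)` onto `Z`. -/
noncomputable def iota : Multiplicative (ZMod p) → L :=
  fun m => ((gen p L Z) ^ ((Multiplicative.toAdd m).val) : ↥Z)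

theorem iota_mem (m : Multiplicative (ZMod p)) : iota p L Z m ∈ Z :=
  ((gen p L Z) ^ ((Multiplicative.toAdd m).val) : ↥Z).2

theorem iota_mul (z w : Multiplicative (ZMod p)) :
    iota p L Z (z * w) = iota p L Z z * iota p L Z w := by
  haveI : NeZero p := ⟨h.prime.ne_zero⟩
  rw [show iota p L Z z * iota p L Z w
      = ((gen p L Z ^ ((Multiplicative.toAdd z).val) *
          gen p L Z ^ ((Multiplicative.toAdd w).val) : ↥Z) : L) from rfl]
  rw [← pow_add]
  show ((gen p L Z ^ ((Multiplicative.toAdd (z*w)).val) : ↥Z) : L) = _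
  congr 1
  rw [show Multiplicative.toAdd (z * w) = Multiplicative.toAdd z + Multiplicative.toAdd w
    from rfl]
  rw [ZMod.val_add]
  have e : ((Multiplicative.toAdd z).val + (Multiplicative.toAdd w).val) % p
      = ((Multiplicative.toAdd z).val + (Multiplicative.toAdd w).val) %
        orderOf (gen p L Z) := by rw [orderOf_gen p L Z]
  rw [e]
  exact pow_mod_orderOf _ _

theorem iota_inj : Function.Injective (iota p L Z) := by
  haveI := h.fin
  haveI : Finite ↥Z := Subtype.finite
  haveI : NeZero p := ⟨h.prime.ne_zero⟩
  intro a b hab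
  have h1 : gen p L Z ^ ((Multiplicative.toAdd a).val)
      = gen p L Z ^ ((Multiplicative.toAdd b).val) := Subtype.coe_injective hab
  have h2 : (Multiplicative.toAdd a).val = (Multiplicative.toAdd b).val := by
    refine pow_injOn_Iio_orderOf ?_ ?_ h1 <;>
      · show _ < orderOf (gen p L Z)
        rw [orderOf_gen p L Z]
        exact ZMod.val_lt _
  exact Multiplicative.toAdd.injective (ZMod.val_injective p h2)

theorem iota_surj {x : L} (hx : x ∈ Z) : ∃ m, iota p L Z m = x := by
  haveI : NeZero p := ⟨h.prime.ne_zero⟩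
  obtain ⟨k, hk⟩ := Subgroup.mem_zpowers_iff.mp (gen_spec p L Z (⟨x, hx⟩ : ↥Z))
  refine ⟨Multiplicative.ofAdd ((k : ZMod p)), ?_⟩
  show ((gen p L Z ^ (((k : ZMod p)).val) : ↥Z) : L) = x
  have key : gen p L Z ^ (((k : ZMod p)).val) = (⟨x, hx⟩ : ↥Z) := by
    have e1 : gen p L Z ^ ((((k : ZMod p)).val : ℤ)) = gen p L Z ^ k := by
      have hv : ((((k : ZMod p)).val : ℤ)) = k % (p : ℤ) := ZMod.val_intCast k
      have e : k % (p : ℤ) = k % ((orderOf (gen p L Z) : ℕ) : ℤ) := by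
        rw [orderOf_gen p L Z]
      rw [hv, e]
      exact zpow_mod_orderOf _ _
    rw [zpow_natCast] at e1
    rw [e1, hk]
  rw [key]

end Gen
end CentralData
end IPLoop

namespace IPLoop

section Carrier
variable {L : Type*} [IPLoop L] (hM : IsMoufang L)
  (hA : ∀ x y z : L, inCenter (assoc x y z)) (hK : ∀ x y : L, inCenter (comm x y))
include hM hA hK

theorem comm_pow_left (x y : L) (n : ℕ) : comm (x^n) y = (comm x y)^n := by
  have h2 := congrArg Subtype.val (Kpow1 hM hA hK x y n)
  rwa [Ctr.coe_pow hM hA hK] at h2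

theorem comm_inv_left (x y : L) : comm x⁻¹ y = (comm x y)⁻¹ :=
  congrArg Subtype.val (Kinv1 hM hA hK x y)

theorem assoc_pow_first (x z w : L) (n : ℕ) : assoc (x^n) z w = (assoc x z w)^n := by
  have h2 := congrArg Subtype.val (Apow1 hM hA hK x z w n)
  rwa [Ctr.coe_pow hM hA hK] at h2

theorem assoc_inv_first (x z w : L) : assoc x⁻¹ z w = (assoc x z w)⁻¹ :=
  congrArg Subtype.val (Ainv1 hM hA hK x z w)

theorem assoc_mul_first (x y z w : L) :
    assoc (x*y) z w = assoc x z w * assoc y z w :=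
  congrArg Subtype.val (Amul1 hM hA hK x y z w)

theorem comm_mul_left_L (x y z : L) :
    comm (x*y) z = (comm x z * comm y z) * (assoc x y z)^(3:ℕ) := by
  have h2 := congrArg Subtype.val (Kmul hM hA hK x y z)
  rwa [show (ctrK hK x z * ctrK hK y z * (ctrA hA x y z)^(3:ℕ)).val
    = (comm x z * comm y z) * ((ctrA hA x y z)^(3:ℕ)).val from rfl,
    Ctr.coe_pow hM hA hK] at h2

theorem assoc_cyc_L (x y z : L) : assoc x y z = assoc y z x := cyc hM hA hK x y z
theorem assoc_s12_L (x y z : L) : assoc x y z = (assoc y x z)⁻¹ := s12 hM hA hK x y z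

end Carrier

namespace CentralData
section QuotC
variable (p : ℕ) (L : Type) [IPLoop L] (Z : Set L) [h : CentralData p L Z]
include h

theorem qrefl (x : L) : x⁻¹ * x ∈ Z := by rw [inv_mul]; exact h.one_mem

theorem qsymm {x y : L} (hxy : x⁻¹*y ∈ Z) : y⁻¹*x ∈ Z := by
  rw [show y⁻¹*x = (x*(x⁻¹*y))⁻¹*x by rw [mul_inv_cancel_left'],
    (h.central _ hxy).inv_mul_self x]
  exact h.inv_mem _ hxy

theorem qtrans {x y z : L} (hxy : x⁻¹*y ∈ Z) (hyz : y⁻¹*z ∈ Z) : x⁻¹*z ∈ Z := by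
  have hz : x*((x⁻¹*y)*(y⁻¹*z)) = z := by
    calc x*((x⁻¹*y)*(y⁻¹*z)) = (x*(x⁻¹*y))*(y⁻¹*z) := ((h.central _ hxy).a2 x _).symm
    _ = y*(y⁻¹*z) := by rw [mul_inv_cancel_left']
    _ = z := mul_inv_cancel_left' y z
  rw [← hz, IPLoop.inv_mul_cancel_left]
  exact h.mul_mem _ hxy _ hyz

/-- the congruence modulo `Z` -/
def sd : Setoid L :=
  ⟨fun x y => x⁻¹*y ∈ Z,
    ⟨fun x => qrefl p L Z x, fun hxy => qsymm p L Z hxy, fun hxy hyz => qtrans p L Z hxy hyz⟩⟩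

/-- the quotient loop (in fact an abelian group) -/
def Q : Type := Quotient (sd p L Z)

/-- quotient map -/
def qmk (x : L) : Q p L Z := Quotient.mk (sd p L Z) x

theorem qsound {x y : L} (hxy : x⁻¹*y ∈ Z) : qmk p L Z x = qmk p L Z y :=
  Quotient.sound hxy

theorem qmk_eq_iff {x y : L} : qmk p L Z x = qmk p L Z y ↔ x⁻¹*y ∈ Z :=
  ⟨fun hq => Quotient.exact hq, fun hr => qsound p L Z hr⟩

theorem exists_rep {x y : L} (hxy : qmk p L Z x = qmk p L Z y) : ∃ s ∈ Z, y = x * s :=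
  ⟨x⁻¹*y, (qmk_eq_iff p L Z).1 hxy, (mul_inv_cancel_left' x y).symm⟩

theorem mul_compat {x y x' y' : L} (hx : x⁻¹*x' ∈ Z) (hy : y⁻¹*y' ∈ Z) :
    (x*y)⁻¹*(x'*y') ∈ Z := by
  have e1 : x' = x*(x⁻¹*x') := (mul_inv_cancel_left' _ _).symm
  have e2 : y' = y*(y⁻¹*y') := (mul_inv_cancel_left' _ _).symm
  rw [e1, e2, (h.central _ hx).shift1 x (y*(y⁻¹*y')), ← (h.central _ hy).a3 x y,
    (h.central _ hx).a3 (x*y), IPLoop.inv_mul_cancel_left]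
  exact h.mul_mem _ hy _ hx

theorem inv_compat {x x' : L} (hx : x⁻¹*x' ∈ Z) : (x⁻¹)⁻¹*(x'⁻¹) ∈ Z := by
  rw [inv_inv', show x' = x*(x⁻¹*x') from (mul_inv_cancel_left' _ _).symm, mul_inv_rev',
    (h.central _ hx).inv.swap, mul_inv_cancel_left']
  exact h.inv_mem _ hx

instance qgroup : CommGroup (Q p L Z) where
  mul a b := Quotient.liftOn₂ a b (fun x y => qmk p L Z (x*y))
    (fun _ _ _ _ hx hy => qsound p L Z (mul_compat p L Z hx hy))
  one := qmk p L Z 1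
  inv a := Quotient.liftOn a (fun x => qmk p L Z x⁻¹)
    (fun _ _ hx => qsound p L Z (inv_compat p L Z hx))
  mul_assoc a b c := Quotient.inductionOn₃ a b c fun x y z => qsound p L Z (by
    rw [assoc_spec x y z, ((hA (Z := Z)) x y z).inv_mul_self]
    exact h.inv_mem _ (h.assoc_mem x y z))
  one_mul a := Quotient.inductionOn a fun x => qsound p L Z (by
    rw [IPLoop.one_mul, inv_mul]; exact h.one_mem)
  mul_one a := Quotient.inductionOn a fun x => qsound p L Z (by
    rw [IPLoop.mul_one, inv_mul]; exact h.one_mem)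
  inv_mul_cancel a := Quotient.inductionOn a fun x => qsound p L Z (by
    rw [inv_mul, inv_one', IPLoop.mul_one]; exact h.one_mem)
  mul_comm a b := Quotient.inductionOn₂ a b fun x y => qsound p L Z (h.comm_mem y x)

theorem qmk_mul (x y : L) : qmk p L Z (x*y) = qmk p L Z x * qmk p L Z y := rfl
theorem qmk_one : (1 : Q p L Z) = qmk p L Z 1 := rfl
theorem qmk_inv (x : L) : (qmk p L Z x)⁻¹ = qmk p L Z x⁻¹ := rfl

theorem qmk_surj : Function.Surjective (qmk p L Z) :=
  fun a => Quotient.inductionOn a fun x => ⟨x, rfl⟩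

theorem qmk_pow (x : L) (n : ℕ) : (qmk p L Z x)^n = qmk p L Z (x^n) := by
  induction n with
  | zero => rw [pow_zero]; rfl
  | succ n ih =>
    rw [pow_succ, ih, ← qmk_mul, pow_succ_r h.mou (hA (Z := Z)) (hK (Z := Z))]

theorem qmk_eq_one {x : L} : qmk p L Z x = 1 ↔ x ∈ Z := by
  rw [qmk_one, qmk_eq_iff, IPLoop.mul_one]
  exact ⟨fun hx => inv_inv' x ▸ h.inv_mem _ hx, fun hx => h.inv_mem _ hx⟩

theorem qfin : Finite (Q p L Z) := by
  haveI := h.fin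
  exact Quotient.finite _

theorem exists_out (x : L) : ∃ s ∈ Z, Quotient.out (qmk p L Z x) = x * s := by
  have hrel : qmk p L Z (Quotient.out (qmk p L Z x)) = qmk p L Z x := Quotient.out_eq _
  exact exists_rep p L Z hrel.symm

end QuotC
end CentralData
end IPLoop

namespace IPLoop
namespace CentralData
section Main
variable (p : ℕ) (L : Type) [IPLoop L] (Z : Set L) [h : CentralData p L Z]
include h

theorem one_pow_L (n : ℕ) : (1:L)^n = 1 := by
  induction n with
  | zero => rfl
  | succ n ih => rw [pow_succ_def, ih, IPLoop.mul_one]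

theorem exists_coded :
    ∃ (C : Type) (instC : CommGroup C) (V : CVSData p C) (E : CodedExtension p C V L),
      ∀ x : L, (E.π x = 1 ↔ x ∈ Z) := by
  haveI : NeZero p := ⟨h.prime.ne_zero⟩
  have hM := h.mou
  have hA' : ∀ x y z : L, inCenter (assoc x y z) := hA (Z := Z)
  have hK' : ∀ x y : L, inCenter (comm x y) := hK (Z := Z)
  have hinj : Function.Injective (iota p L Z) := iota_inj p L Z
  set ρ : L → Multiplicative (ZMod p) := Function.invFun (iota p L Z) with hρdef
  have hιρ : ∀ {x : L}, x ∈ Z → iota p L Z (ρ x) = x := by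
    intro x hx
    obtain ⟨m, hm⟩ := iota_surj p L Z hx
    exact Function.invFun_eq ⟨m, hm⟩
  have hι1 : iota p L Z (1 : Multiplicative (ZMod p)) = 1 := by
    show ((gen p L Z ^ ((Multiplicative.toAdd (1 : Multiplicative (ZMod p))).val) : ↥Z) : L) = 1
    rw [show (Multiplicative.toAdd (1 : Multiplicative (ZMod p))) = (0 : ZMod p) from rfl,
      ZMod.val_zero, pow_zero]
    rfl
  have hιinv : ∀ m, iota p L Z m⁻¹ = (iota p L Z m)⁻¹ := by
    intro m
    have hm := iota_mul p L Z m m⁻¹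
    rw [mul_inv_cancel, hι1] at hm
    exact eq_inv_of_mul_eq_one hm.symm
  have hιpow : ∀ m (n : ℕ), iota p L Z (m^n) = (iota p L Z m)^n := by
    intro m n
    induction n with
    | zero => rw [pow_zero, pow_zero_def, hι1]
    | succ n ih => rw [pow_succ, iota_mul, ih, pow_succ_r hM hA' hK']
  have hZpow : ∀ {x}, x ∈ Z → ∀ n : ℕ, x^n ∈ Z := by
    intro x hx n
    induction n with
    | zero => rw [pow_zero_def]; exact h.one_mem
    | succ n ih => rw [pow_succ_def]; exact h.mul_mem _ hx _ ih
  have hρmul : ∀ {x y}, x ∈ Z → y ∈ Z → ρ (x*y) = ρ x * ρ y := by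
    intro x y hx hy; apply hinj; rw [iota_mul, hιρ hx, hιρ hy, hιρ (h.mul_mem _ hx _ hy)]
  have hρinv : ∀ {x}, x ∈ Z → ρ x⁻¹ = (ρ x)⁻¹ := by
    intro x hx; apply hinj; rw [hιinv, hιρ hx, hιρ (h.inv_mem _ hx)]
  have hρpow : ∀ {x}, x ∈ Z → ∀ n : ℕ, ρ (x^n) = (ρ x)^n := by
    intro x hx n; apply hinj; rw [hιpow, hιρ hx, hιρ (hZpow hx n)]
  have hρ1 : ρ (1:L) = 1 := by apply hinj; rw [hι1, hιρ h.one_mem]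
  set σf : Q p L Z → Multiplicative (ZMod p) := fun c => ρ ((Quotient.out c)^p) with hσdef
  set χf : Q p L Z → Q p L Z → Multiplicative (ZMod p) :=
    fun c d => ρ (comm (Quotient.out c) (Quotient.out d)) with hχdef
  set αf : Q p L Z → Q p L Z → Q p L Z → Multiplicative (ZMod p) :=
    fun c d e => ρ (assoc (Quotient.out c) (Quotient.out d) (Quotient.out e)) with hαdef
  have hσ : ∀ x : L, σf (qmk p L Z x) = ρ (x^p) := by
    intro x
    obtain ⟨s, hs, hout⟩ := exists_out p L Z x
    show ρ ((Quotient.out (qmk p L Z x))^p) = _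
    rw [hout, central_mul_pow hM hA' hK' (h.central _ hs), mem_pow_card hs, IPLoop.mul_one]
  have hχ : ∀ x y : L, χf (qmk p L Z x) (qmk p L Z y) = ρ (comm x y) := by
    intro x y
    obtain ⟨s, hs, hout1⟩ := exists_out p L Z x
    obtain ⟨t, ht, hout2⟩ := exists_out p L Z y
    show ρ (comm (Quotient.out (qmk p L Z x)) (Quotient.out (qmk p L Z y))) = _
    rw [hout1, hout2, comm_mul_central_left (h.central _ hs),
      comm_mul_central_right (h.central _ ht)]
  have hα : ∀ x y z : L,
      αf (qmk p L Z x) (qmk p L Z y) (qmk p L Z z) = ρ (assoc x y z) := by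
    intro x y z
    obtain ⟨s, hs, hout1⟩ := exists_out p L Z x
    obtain ⟨t, ht, hout2⟩ := exists_out p L Z y
    obtain ⟨u, hu, hout3⟩ := exists_out p L Z z
    show ρ (assoc (Quotient.out (qmk p L Z x)) (Quotient.out (qmk p L Z y))
      (Quotient.out (qmk p L Z z))) = _
    rw [hout1, hout2, hout3, assoc_mul_central (h.central _ hs),
      assoc_mul_central2 hM hA' hK' (h.central _ ht),
      assoc_mul_central3 hM hA' hK' (h.central _ hu)]
  have hσnat : ∀ (x : L) (m : ℕ), σf ((qmk p L Z x)^m) = (σf (qmk p L Z x))^m := by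
    intro x m
    rw [qmk_pow, hσ, pow_mul' hM hA' hK', hσ, ← hρpow (h.pow_mem x) m,
      pow_mul' hM hA' hK', Nat.mul_comm]
  have hσinv : ∀ c : Q p L Z, σf c⁻¹ = (σf c)⁻¹ := by
    intro c; obtain ⟨y, rfl⟩ := qmk_surj p L Z c
    rw [qmk_inv, hσ, inv_pow' hM hA' hK', hρinv (h.pow_mem y), hσ]
  have hpowform : ∀ x y : L, (x*y)^p = (x^p * y^p) * (comm y x)^(p.choose 2) :=
    fun x y => mul_pow_formula hM hA' hK' x y p
  refine ⟨Q p L Z, qgroup p L Z,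
    { finiteC := qfin p L Z
      elemC := ?elemC
      σ := σf, χ := χf, α := αf
      σ_pow := ?σpow
      σ_mul_two := ?σtwo
      σ_mul_odd := ?σodd
      χ_symp := ?χsymp
      χ_skew := ?χskew
      χ_pow := ?χpow
      χ_mul := ?χmul
      α_symp := ?αsymp
      α_skew := ?αskew
      α_pow := ?αpow
      α_mul := ?αmul },
    { π := qmk p L Z, ι := iota p L Z
      π_surj := qmk_surj p L Z
      π_mul := fun x y => rfl
      ι_inj := hinj
      ι_mul := iota_mul p L Z
      ι_central := fun m => h.central _ (iota_mem p L Z m)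
      ker_eq := ?ker
      pow_eq := ?poweq
      comm_eq := ?commeq
      assoc_eq := ?assoceq },
    fun x => qmk_eq_one p L Z⟩
  case elemC =>
    intro c; obtain ⟨x, rfl⟩ := qmk_surj p L Z c
    rw [qmk_pow]
    exact (qmk_eq_one p L Z).2 (h.pow_mem x)
  case σpow =>
    intro c n; obtain ⟨x, rfl⟩ := qmk_surj p L Z c
    cases n with
    | ofNat m =>
      rw [Int.ofNat_eq_coe, zpow_natCast, zpow_natCast]
      exact hσnat x m
    | negSucc m =>
      rw [zpow_negSucc, zpow_negSucc, hσinv, hσnat]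
  case σtwo =>
    intro hp2 x' y'
    obtain ⟨x, rfl⟩ := qmk_surj p L Z x'
    obtain ⟨y, rfl⟩ := qmk_surj p L Z y'
    have hself : ∀ {s : L}, s ∈ Z → s⁻¹ = s := by
      intro s hs
      have h2 := mem_pow_card hs
      rw [hp2, pow_succ_def, pow_one_def] at h2
      exact (eq_inv_of_mul_eq_one h2).symm
    have hch : (comm y x)^(p.choose 2) = comm y x := by
      rw [hp2]
      show (comm y x)^(1:ℕ) = comm y x
      exact pow_one_def _
    rw [← qmk_mul, hσ, hσ, hσ, hχ, hpowform, hch,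
      hρmul (h.mul_mem _ (h.pow_mem x) _ (h.pow_mem y)) (h.comm_mem y x),
      hρmul (h.pow_mem x) (h.pow_mem y),
      comm_skew x y, hself (h.comm_mem x y)]
  case σodd =>
    intro hp2 x' y'
    obtain ⟨x, rfl⟩ := qmk_surj p L Z x'
    obtain ⟨y, rfl⟩ := qmk_surj p L Z y'
    obtain ⟨t, ht⟩ := h.prime.dvd_choose_self (by norm_num) hp2
    have hch : (comm y x)^(p.choose 2) = 1 := by
      rw [ht, ← pow_mul' hM hA' hK', mem_pow_card (h.comm_mem y x), one_pow_L p L Z]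
    rw [← qmk_mul, hσ, hσ, hσ, hpowform, hch, IPLoop.mul_one,
      hρmul (h.pow_mem x) (h.pow_mem y)]
  case χsymp =>
    intro c
    show ρ (comm (Quotient.out c) (Quotient.out c)) = 1
    rw [comm_self, hρ1]
  case χskew =>
    intro c d
    show ρ (comm (Quotient.out c) (Quotient.out d))
      = (ρ (comm (Quotient.out d) (Quotient.out c)))⁻¹
    rw [comm_skew (Quotient.out d) (Quotient.out c),
      hρinv (h.comm_mem (Quotient.out d) (Quotient.out c))]
  case χpow =>
    intro c d n
    obtain ⟨x, rfl⟩ := qmk_surj p L Z c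
    obtain ⟨y, rfl⟩ := qmk_surj p L Z d
    have hnat : ∀ m : ℕ, χf ((qmk p L Z x)^m) (qmk p L Z y)
        = (χf (qmk p L Z x) (qmk p L Z y))^m := by
      intro m
      rw [qmk_pow, hχ, hχ, comm_pow_left hM hA' hK', hρpow (h.comm_mem x y) m]
    cases n with
    | ofNat m => rw [Int.ofNat_eq_coe, zpow_natCast, zpow_natCast]; exact hnat m
    | negSucc m =>
      rw [zpow_negSucc, zpow_negSucc, qmk_pow, qmk_inv, hχ, hχ,
        comm_inv_left hM hA' hK', hρinv (h.comm_mem _ y),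
        comm_pow_left hM hA' hK', hρpow (h.comm_mem x y)]
  case χmul =>
    intro c d e
    obtain ⟨x, rfl⟩ := qmk_surj p L Z c
    obtain ⟨y, rfl⟩ := qmk_surj p L Z d
    obtain ⟨z, rfl⟩ := qmk_surj p L Z e
    rw [← qmk_mul, hχ, hχ, hχ, hα, comm_mul_left_L hM hA' hK',
      hρmul (h.mul_mem _ (h.comm_mem x z) _ (h.comm_mem y z)) (hZpow (h.assoc_mem x y z) 3),
      hρmul (h.comm_mem x z) (h.comm_mem y z), hρpow (h.assoc_mem x y z) 3]
  case αsymp =>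
    intro c d
    refine ⟨?_, ?_, ?_⟩
    · show ρ (assoc (Quotient.out c) (Quotient.out d) (Quotient.out d)) = 1
      rw [ra hM hA' hK', hρ1]
    · show ρ (assoc (Quotient.out d) (Quotient.out c) (Quotient.out d)) = 1
      rw [flex hM hA' hK', hρ1]
    · show ρ (assoc (Quotient.out d) (Quotient.out d) (Quotient.out c)) = 1
      rw [la hM hA' hK', hρ1]
  case αskew =>
    intro c d e
    constructor
    · show ρ (assoc (Quotient.out c) (Quotient.out d) (Quotient.out e))
        = (ρ (assoc (Quotient.out d) (Quotient.out c) (Quotient.out e)))⁻¹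
      rw [s12 hM hA' hK' (Quotient.out c) (Quotient.out d) (Quotient.out e),
        hρinv (h.assoc_mem _ _ _)]
    · show ρ (assoc (Quotient.out c) (Quotient.out d) (Quotient.out e))
        = ρ (assoc (Quotient.out d) (Quotient.out e) (Quotient.out c))
      rw [cyc hM hA' hK' (Quotient.out c) (Quotient.out d) (Quotient.out e)]
  case αpow =>
    intro c d e n
    obtain ⟨x, rfl⟩ := qmk_surj p L Z c
    obtain ⟨y, rfl⟩ := qmk_surj p L Z d
    obtain ⟨z, rfl⟩ := qmk_surj p L Z e
    have hnat : ∀ m : ℕ, αf ((qmk p L Z x)^m) (qmk p L Z y) (qmk p L Z z)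
        = (αf (qmk p L Z x) (qmk p L Z y) (qmk p L Z z))^m := by
      intro m
      rw [qmk_pow, hα, hα, assoc_pow_first hM hA' hK', hρpow (h.assoc_mem x y z) m]
    cases n with
    | ofNat m => rw [Int.ofNat_eq_coe, zpow_natCast, zpow_natCast]; exact hnat m
    | negSucc m =>
      rw [zpow_negSucc, zpow_negSucc, qmk_pow, qmk_inv, hα, hα,
        assoc_inv_first hM hA' hK', hρinv (h.assoc_mem _ y z),
        assoc_pow_first hM hA' hK', hρpow (h.assoc_mem x y z)]
  case αmul =>
    intro c d e f
    obtain ⟨x, rfl⟩ := qmk_surj p L Z c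
    obtain ⟨y, rfl⟩ := qmk_surj p L Z d
    obtain ⟨z, rfl⟩ := qmk_surj p L Z e
    obtain ⟨w, rfl⟩ := qmk_surj p L Z f
    rw [← qmk_mul, hα, hα, hα, assoc_mul_first hM hA' hK',
      hρmul (h.assoc_mem x z w) (h.assoc_mem y z w)]
  case ker =>
    intro x
    rw [qmk_eq_one p L Z]
    constructor
    · intro hx
      obtain ⟨m, hm⟩ := iota_surj p L Z hx
      exact ⟨m, hm.symm⟩
    · rintro ⟨m, rfl⟩
      exact iota_mem p L Z m
  case poweq =>
    intro x
    show x ^ p = iota p L Z (σf (qmk p L Z x))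
    rw [hσ]
    exact (hιρ (h.pow_mem x)).symm
  case commeq =>
    intro x y
    show comm x y = iota p L Z (χf (qmk p L Z x) (qmk p L Z y))
    rw [hχ]
    exact (hιρ (h.comm_mem x y)).symm
  case assoceq =>
    intro x y z
    show assoc x y z = iota p L Z (αf (qmk p L Z x) (qmk p L Z y) (qmk p L Z z))
    rw [hα]
    exact (hιρ (h.assoc_mem x y z)).symm

end Main
end CentralData
end IPLoop

open IPLoop in
/-- (i) Every Moufang loop with a central subgroup `Z` of order `p` whose
quotient is a (finite) elementary abelian `p`-group is a coded extension of a
coded vector space over `F_p` (with `σ(c) = γ^p`, `χ(c,d) = [γ,δ]`,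
`α(c,d,e) = [γ,δ,ε]` well defined on `C = L/Z`).
(ii) Conversely, every loop which is a coded extension of a coded vector
space over `F_p` is Moufang. -/
theorem stmt12 (p : ℕ) (hp : p.Prime) :
    (∀ (L : Type) [instL : IPLoop L], IsMoufang L → Finite L → ∀ Z : Set L,
      (1 : L) ∈ Z → (∀ z ∈ Z, z⁻¹ ∈ Z) → (∀ z ∈ Z, ∀ w ∈ Z, z * w ∈ Z) →
      (∀ z ∈ Z, inCenter z) → Nat.card Z = p →
      (∀ c : L, c ^ p ∈ Z) → (∀ c d : L, comm c d ∈ Z) →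
      (∀ c d e : L, assoc c d e ∈ Z) →
      ∃ (C : Type) (instC : CommGroup C) (V : @CVSData p C instC)
        (E : @CodedExtension p C instC V L instL),
        ∀ x : L, (E.π x = 1 ↔ x ∈ Z)) ∧
    (∀ (L : Type) [IPLoop L] (C : Type) [instC : CommGroup C]
      (V : CVSData p C), CodedExtension p C V L → IsMoufang L) := by
  constructor
  · intro L instL hM hF Z h1 hinv hmul hcent hcard hpowZ hcommZ hassocZ
    haveI : CentralData p L Z :=
      ⟨hp, hM, hF, h1, hinv, hmul, hcent, hcard, hpowZ, hcommZ, hassocZ⟩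
    exact CentralData.exists_coded p L Z
  · intro L _ C instC V E
    exact moufang_of_coded L C V E
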